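/- For every integer n ≥ 3 there exists a real number c with 0 < c < 1 such that Q_n(c) = 0 while Q_m(c) ≠ 0 for every 1 ≤ m < n. -/
import Mathlib


/-- The functions `Q_k : ℝ → ℝ` defined recursively by `Q_1(y) = 1` and
`Q_{k+1}(y) = (2y³ − 2Q_k(y)³)/(2y³ − 3Q_k(y)²)` (for `k ≥ 1`); `Q 0` is set to the
constant `0` (corresponding to `Q_k(c) = f_c^k(0)`), and is never used below. -/
noncomputable def Q : ℕ → ℝ → ℝ
  | 0, _ => 0
  | 1, _ => 1
  | (k + 2), y =>
      (2 * y ^ 3 - 2 * (Q (k + 1) y) ^ 3) / (2 * y ^ 3 - 3 * (Q (k + 1) y) ^ 2)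

lemma Q_succ_succ (k : ℕ) (y : ℝ) :
    Q (k + 2) y = (2 * y ^ 3 - 2 * (Q (k + 1) y) ^ 3) / (2 * y ^ 3 - 3 * (Q (k + 1) y) ^ 2) := by
  simp [Q]

lemma Q_one (y : ℝ) : Q 1 y = 1 := by simp [Q]

lemma Q_zero_pos : ∀ m, 1 ≤ m → 0 < Q m 0 := by
  intro m hm
  induction m, hm using Nat.le_induction with
  | base => simp [Q_one]
  | succ m hm ih =>
    obtain ⟨j, rfl⟩ : ∃ j, m = j + 1 := ⟨m - 1, by omega⟩
    rw [Q_succ_succ]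
    set x := Q (j + 1) 0 with hx
    have hxpos : 0 < x := ih
    apply div_pos_of_neg_of_neg <;> nlinarith [pow_pos hxpos 3, pow_pos hxpos 2]

lemma denom_neg (b : ℝ) (hb : b ≤ 1) (m : ℕ) (hm : 1 ≤ m)
    (h : ∀ c ∈ Set.Icc (0:ℝ) b, c ≤ Q m c) :
    ∀ c ∈ Set.Icc (0:ℝ) b, 2 * c ^ 3 - 3 * (Q m c) ^ 2 < 0 := by
  intro c hc
  rcases eq_or_lt_of_le hc.1 with h0 | h0
  · have := Q_zero_pos m hm
    rw [← h0] at *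
    nlinarith
  · have h1 := h c hc
    have h2 : c ≤ 1 := hc.2.trans hb
    have h3 : c ^ 2 ≤ (Q m c) ^ 2 := by nlinarith
    nlinarith [mul_pos h0 h0]

lemma contQ (b : ℝ) (hb : b ≤ 1) : ∀ m, 1 ≤ m →
    (∀ j, 1 ≤ j → j < m → ∀ c ∈ Set.Icc (0:ℝ) b, c ≤ Q j c) →
    ContinuousOn (Q m) (Set.Icc 0 b) := by
  intro m hm
  induction m, hm using Nat.le_induction with
  | base =>
    intro _
    have : Q 1 = fun _ : ℝ => (1:ℝ) := by funext y; simp [Q_one]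
    rw [this]; exact continuousOn_const
  | succ m hm ih =>
    intro h
    obtain ⟨j, rfl⟩ : ∃ j, m = j + 1 := ⟨m - 1, by omega⟩
    have hQ : Q (j + 2) = fun y : ℝ =>
        (2 * y ^ 3 - 2 * (Q (j + 1) y) ^ 3) / (2 * y ^ 3 - 3 * (Q (j + 1) y) ^ 2) := by
      funext y; rw [Q_succ_succ]
    rw [hQ]
    have hcont : ContinuousOn (Q (j + 1)) (Set.Icc 0 b) :=
      ih (fun i hi1 hi2 => h i hi1 (by omega))
    have hpoly : ContinuousOn (fun y : ℝ => 2 * y ^ 3) (Set.Icc (0:ℝ) b) :=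
      (continuous_const.mul (continuous_pow 3)).continuousOn
    apply ContinuousOn.div
    · exact hpoly.sub (continuousOn_const.mul (hcont.pow 3))
    · exact hpoly.sub (continuousOn_const.mul (hcont.pow 2))
    · intro c hc
      have := denom_neg b hb (j + 1) (by omega)
        (h (j + 1) (by omega) (by omega)) c hc
      intro hokay
      rw [hokay] at this
      -- this : 2 * c ^ 3 - 3 * _ < 0, but careful about form
      linarith
  
lemma key : ∀ k : ℕ, 1 ≤ k → ∃ b : ℝ, 0 < b ∧ b ≤ 1 ∧ (2 ≤ k → b < 1) ∧ Q k b = b ∧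
    ∀ m, 1 ≤ m → m ≤ k → ∀ c ∈ Set.Icc (0:ℝ) b, c ≤ Q m c := by
  intro k hk
  induction k, hk using Nat.le_induction with
  | base =>
    refine ⟨1, one_pos, le_refl _, by omega, by simp [Q_one], ?_⟩
    intro m hm1 hm2 c hc
    interval_cases m
    rw [Q_one]; exact hc.2
  | succ k hk ih =>
    obtain ⟨b, hb0, hb1, _, hfix, hmono⟩ := ih
    obtain ⟨j, rfl⟩ : ∃ j, k = j + 1 := ⟨k - 1, by omega⟩
    -- Q (j+2) b = 0
    have hQb : Q (j + 2) b = 0 := by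
      rw [Q_succ_succ, hfix]
      simp
    have hcont : ContinuousOn (Q (j + 2)) (Set.Icc 0 b) :=
      contQ b hb1 (j + 2) (by omega) (fun i hi1 hi2 => hmono i hi1 (by omega))
    -- g = Q (j+2) - id, continuous
    set g : ℝ → ℝ := fun c => Q (j + 2) c - c with hg
    have hgcont : ContinuousOn g (Set.Icc 0 b) := hcont.sub continuousOn_id
    have hg0 : 0 < g 0 := by
      simpa [hg] using Q_zero_pos (j + 2) (by omega)
    have hgb : g b < 0 := by simp [hg, hQb, hb0]
    -- zero set
    set Z : Set ℝ := Set.Icc 0 b ∩ g ⁻¹' {0} with hZ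
    have hZclosed : IsClosed Z :=
      hgcont.preimage_isClosed_of_isClosed isClosed_Icc isClosed_singleton
    have hZcompact : IsCompact Z :=
      isCompact_Icc.of_isClosed_subset hZclosed Set.inter_subset_left
    have hZne : Z.Nonempty := by
      have h0mem : (0:ℝ) ∈ Set.Icc (g b) (g 0) := ⟨le_of_lt hgb, le_of_lt hg0⟩
      have := intermediate_value_Icc' (le_of_lt hb0) hgcont h0mem
      obtain ⟨z, hz1, hz2⟩ := this
      exact ⟨z, hz1, by simp [hz2]⟩
    obtain ⟨b', hb'Z, hb'least⟩ := hZcompact.exists_isLeast hZne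
    have hb'Icc : b' ∈ Set.Icc (0:ℝ) b := hb'Z.1
    have hb'fix : Q (j + 2) b' = b' := by
      have : g b' = 0 := hb'Z.2
      simp [hg] at this; linarith
    have hb'pos : 0 < b' := by
      rcases eq_or_lt_of_le hb'Icc.1 with h | h
      · exfalso
        have := Q_zero_pos (j + 2) (by omega)
        rw [← h] at hb'fix
        rw [hb'fix] at this
        exact lt_irrefl _ this
      · exact h
    have hb'ltb : b' < b := by
      rcases eq_or_lt_of_le hb'Icc.2 with h | h
      · exfalso; rw [h] at hb'fix; rw [hQb] at hb'fix; linarith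
      · exact h
    refine ⟨b', hb'pos, le_of_lt (lt_of_lt_of_le hb'ltb hb1), fun _ => lt_of_lt_of_le hb'ltb hb1,
      hb'fix, ?_⟩
    intro m hm1 hm2 c hc
    have hcIcc : c ∈ Set.Icc (0:ℝ) b := ⟨hc.1, hc.2.trans (le_of_lt hb'ltb)⟩
    rcases Nat.lt_or_ge m (j + 2) with hm | hm
    · exact hmono m hm1 (by omega) c hcIcc
    · have hmeq : m = j + 2 := by omega
      subst hmeq
      by_contra hlt
      push_neg at hlt
      -- Q (j+2) c < c, c < b', find zero in [0, c]
      have hcb' : c < b' := by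
        rcases eq_or_lt_of_le hc.2 with h | h
        · exfalso; rw [h] at hlt; rw [hb'fix] at hlt; exact lt_irrefl _ hlt
        · exact h
      have hc0 : 0 ≤ c := hc.1
      have hgc : g c < 0 := by simp [hg]; linarith
      have hsub : Set.Icc (0:ℝ) c ⊆ Set.Icc 0 b := Set.Icc_subset_Icc le_rfl hcIcc.2
      have hgcont' : ContinuousOn g (Set.Icc 0 c) := hgcont.mono hsub
      have h0mem : (0:ℝ) ∈ Set.Icc (g c) (g 0) := ⟨le_of_lt hgc, le_of_lt hg0⟩
      obtain ⟨z, hz1, hz2⟩ := intermediate_value_Icc' hc0 hgcont' h0mem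
      have hzZ : z ∈ Z := ⟨hsub hz1, by simp [hz2]⟩
      have := hb'least hzZ
      have : b' ≤ c := this.trans hz1.2
      linarith

/-- For every integer `n ≥ 3` there exists a real number `c` with `0 < c < 1` such that
`Q_n(c) = 0` while `Q_m(c) ≠ 0` for every `1 ≤ m < n`. -/
theorem exists_c_Qn_zero_Qm_ne_zero (n : ℕ) (hn : 3 ≤ n) :
    ∃ c : ℝ, 0 < c ∧ c < 1 ∧ Q n c = 0 ∧ ∀ m : ℕ, 1 ≤ m → m < n → Q m c ≠ 0 := by
  obtain ⟨j, rfl⟩ : ∃ j, n = j + 2 := ⟨n - 2, by omega⟩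
  obtain ⟨b, hb0, hb1, hblt, hfix, hmono⟩ := key (j + 1) (by omega)
  refine ⟨b, hb0, hblt (by omega), ?_, ?_⟩
  · rw [Q_succ_succ, hfix]; simp
  · intro m hm1 hm2
    have := hmono m hm1 (by omega) b ⟨le_of_lt hb0, le_refl _⟩
    intro h
    rw [h] at this
    linarith
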